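/- Let X1, X2, X3, Y, U take values in finite sets and let the strictly positive joint distribution factorize as P(x1, x2, x3, y) = Σ_u P(u)·P(x3)·P(y|x3, u)·P(x1|u)·P(x2|y, x1), where U is unobserved and P(u), P(x3), P(y|x3,u), P(x1|u), P(x2|y,x1) are given conditional probability tables. Define the post-intervention distribution P_{x1}(x2, x3, y) = Σ_u P(u)·P(x3)·P(y|x3, u)·P(x2|y, x1) (the factorization with the term P(x1|u) deleted). Then P_{x1}(y | x2, x3) = P(y|x3)·P(x2|y, x1) / Σ_{y'} P(y'|x3)·P(x2|y', x1), where P(y|x3) and P(x2|y, x1) are the observational conditional distributions computed from the joint P(x1, x2, x3, y). -/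

import Mathlib

/-! The data-generating process of the ADMG over observed variables `{X1, X2, X3, Y}` with
directed edges `X3 → Y`, `Y → X2`, `X1 → X2` and bidirected edge `Y ↔ X1`, the bidirected
edge being realized by a latent variable `U` with `U → X1` and `U → Y`. The variables take
values in the finite types `A1, A2, A3, AY, AU`. -/

noncomputable section

variable {A1 A2 A3 AY AU : Type}
variable [Fintype A1] [Fintype A2] [Fintype A3] [Fintype AY] [Fintype AU]
variable (pU : AU → ℝ) (pX3 : A3 → ℝ) (pY : AY → A3 → AU → ℝ)
variable (pX1 : A1 → AU → ℝ) (pX2 : A2 → AY → A1 → ℝ)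

/-- The observational joint distribution
`P(x1, x2, x3, y) = Σ_u P(u)·P(x3)·P(y|x3,u)·P(x1|u)·P(x2|y,x1)`. -/
def joint (x1 : A1) (x2 : A2) (x3 : A3) (y : AY) : ℝ :=
  ∑ u : AU, pU u * pX3 x3 * pY y x3 u * pX1 x1 u * pX2 x2 y x1

/-- The post-intervention distribution
`P_{x1}(x2, x3, y) = Σ_u P(u)·P(x3)·P(y|x3,u)·P(x2|y,x1)` (the factor `P(x1|u)` deleted). -/
def postInt (x1 : A1) (x2 : A2) (x3 : A3) (y : AY) : ℝ :=
  ∑ u : AU, pU u * pX3 x3 * pY y x3 u * pX2 x2 y x1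

/-- The observational conditional `P(y | x3)` computed from the joint. -/
def obsYgivenX3 (x3 : A3) (y : AY) : ℝ :=
  (∑ x1 : A1, ∑ x2 : A2, joint pU pX3 pY pX1 pX2 x1 x2 x3 y) /
    (∑ x1 : A1, ∑ x2 : A2, ∑ y' : AY, joint pU pX3 pY pX1 pX2 x1 x2 x3 y')

/-- The observational conditional `P(x2 | y, x1)` computed from the joint. -/
def obsX2givenYX1 (x2 : A2) (y : AY) (x1 : A1) : ℝ :=
  (∑ x3 : A3, joint pU pX3 pY pX1 pX2 x1 x2 x3 y) /
    (∑ x3 : A3, ∑ x2' : A2, joint pU pX3 pY pX1 pX2 x1 x2' x3 y)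

end

/-! Summing out `x1` and `x2`, whose tables are normalized, shows that the observational
`P(y | x3)` is `Σ_u P(u)·P(y|x3,u)` and `P(x2 | y, x1)` is the given table, while
`P_{x1}(x2, x3, y) = P(x3)·P(y|x3)·P(x2|y,x1)`. Conditioning the latter on `(x2, x3)` cancels
the factor `P(x3)` and yields the functional. -/

open Finset

theorem div_sum_eq_of_eq_mul {ι K : Type*} [Semifield K] {s : Finset ι} {N p : ι → K} {c : K}
    (hN : ∀ i, N i = c * p i) (hp : ∑ i ∈ s, p i = 1) (hN0 : ∑ i ∈ s, N i ≠ 0)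
    (i : ι) :
    N i / ∑ j ∈ s, N j = p i := by
  have hsum : ∑ j ∈ s, N j = c := by simp only [hN, ← mul_sum, hp, mul_one]
  rw [hsum] at hN0 ⊢
  rw [hN, mul_div_cancel_left₀ _ hN0]

section

variable {A1 A2 A3 AY AU : Type} [Fintype AU]
variable (pU : AU → ℝ) (pX3 : A3 → ℝ) (pY : AY → A3 → AU → ℝ)
variable (pX1 : A1 → AU → ℝ) (pX2 : A2 → AY → A1 → ℝ)

def latentYgivenX3 (x3 : A3) (y : AY) : ℝ :=
  ∑ u : AU, pU u * pY y x3 u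

def jointX1X3Y (x1 : A1) (x3 : A3) (y : AY) : ℝ :=
  pX3 x3 * ∑ u : AU, pU u * pY y x3 u * pX1 x1 u

theorem joint_eq_jointX1X3Y_mul (x1 : A1) (x2 : A2) (x3 : A3) (y : AY) :
    joint pU pX3 pY pX1 pX2 x1 x2 x3 y = jointX1X3Y pU pX3 pY pX1 x1 x3 y * pX2 x2 y x1 := by
  simp only [joint, jointX1X3Y, mul_sum, sum_mul]
  exact sum_congr rfl fun u _ => by ring

theorem postInt_eq_mul (x1 : A1) (x2 : A2) (x3 : A3) (y : AY) :
    postInt pU pX3 pY pX2 x1 x2 x3 y = pX3 x3 * (latentYgivenX3 pU pY x3 y * pX2 x2 y x1) := by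
  simp only [postInt, latentYgivenX3, mul_sum, sum_mul]
  exact sum_congr rfl fun u _ => by ring

theorem sum_jointX1X3Y [Fintype A1] (hX1 : ∀ u, ∑ x1, pX1 x1 u = 1) (x3 : A3) (y : AY) :
    ∑ x1, jointX1X3Y pU pX3 pY pX1 x1 x3 y = pX3 x3 * latentYgivenX3 pU pY x3 y := by
  simp only [jointX1X3Y, latentYgivenX3, ← mul_sum]
  rw [sum_comm]
  simp only [← mul_sum, hX1, mul_one]

theorem sum_latentYgivenX3 [Fintype AY] (hU : ∑ u, pU u = 1)
    (hY : ∀ x3 u, ∑ y, pY y x3 u = 1) (x3 : A3) :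
    ∑ y, latentYgivenX3 pU pY x3 y = 1 := by
  simp only [latentYgivenX3]
  rw [sum_comm]
  simp only [← mul_sum, hY, mul_one, hU]

theorem pX3_ne_zero_of_joint_ne_zero {x1 : A1} {x2 : A2} {x3 : A3} {y : AY}
    (h : joint pU pX3 pY pX1 pX2 x1 x2 x3 y ≠ 0) : pX3 x3 ≠ 0 := by
  rintro h3
  simp [joint, h3] at h

theorem obsYgivenX3_eq [Fintype A1] [Fintype A2] [Fintype AY] (hU : ∑ u, pU u = 1)
    (hY : ∀ x3 u, ∑ y, pY y x3 u = 1) (hX1 : ∀ u, ∑ x1, pX1 x1 u = 1)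
    (hX2 : ∀ y x1, ∑ x2, pX2 x2 y x1 = 1) {x3 : A3}
    (hden : ∑ x1, ∑ x2, ∑ y', joint pU pX3 pY pX1 pX2 x1 x2 x3 y' ≠ 0) (y : AY) :
    obsYgivenX3 pU pX3 pY pX1 pX2 x3 y = latentYgivenX3 pU pY x3 y := by
  have hmarg : ∀ y', ∑ x1, ∑ x2, joint pU pX3 pY pX1 pX2 x1 x2 x3 y' =
      pX3 x3 * latentYgivenX3 pU pY x3 y' := fun y' => by
    simp only [joint_eq_jointX1X3Y_mul, ← mul_sum, hX2, mul_one,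
      sum_jointX1X3Y pU pX3 pY pX1 hX1]
  have hswap : ∑ x1, ∑ x2, ∑ y', joint pU pX3 pY pX1 pX2 x1 x2 x3 y' =
      ∑ y', ∑ x1, ∑ x2, joint pU pX3 pY pX1 pX2 x1 x2 x3 y' :=
    (sum_congr rfl fun _ _ => sum_comm).trans sum_comm
  rw [hswap] at hden
  rw [obsYgivenX3, hswap]
  exact div_sum_eq_of_eq_mul hmarg (sum_latentYgivenX3 pU pY hU hY x3) hden y

theorem obsX2givenYX1_eq [Fintype A2] [Fintype A3] (hX2 : ∀ y x1, ∑ x2, pX2 x2 y x1 = 1)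
    {y : AY} {x1 : A1}
    (hden : ∑ x3, ∑ x2', joint pU pX3 pY pX1 pX2 x1 x2' x3 y ≠ 0) (x2 : A2) :
    obsX2givenYX1 pU pX3 pY pX1 pX2 x2 y x1 = pX2 x2 y x1 := by
  have hmarg : ∀ x2', ∑ x3, joint pU pX3 pY pX1 pX2 x1 x2' x3 y =
      (∑ x3, jointX1X3Y pU pX3 pY pX1 x1 x3 y) * pX2 x2' y x1 := fun x2' => by
    simp only [joint_eq_jointX1X3Y_mul, sum_mul]
  rw [sum_comm] at hden
  rw [obsX2givenYX1, sum_comm]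
  exact div_sum_eq_of_eq_mul hmarg (hX2 y x1) hden x2

end

theorem do_conditional_eq_cidp_functional_general
    {A1 A2 A3 AY AU : Type}
    [Fintype A1] [Fintype A2] [Fintype A3] [Fintype AY] [Fintype AU]
    (pU : AU → ℝ) (pX3 : A3 → ℝ) (pY : AY → A3 → AU → ℝ)
    (pX1 : A1 → AU → ℝ) (pX2 : A2 → AY → A1 → ℝ)
    (hU : ∑ u, pU u = 1)
    (hY : ∀ x3 u, ∑ y, pY y x3 u = 1) (hX1 : ∀ u, ∑ x1, pX1 x1 u = 1)
    (hX2 : ∀ y x1, ∑ x2, pX2 x2 y x1 = 1)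
    (hpos : ∀ x1 x2 x3 y, 0 < joint pU pX3 pY pX1 pX2 x1 x2 x3 y) :
    ∀ x1 x2 x3 y,
      postInt pU pX3 pY pX2 x1 x2 x3 y /
          (∑ y' : AY, postInt pU pX3 pY pX2 x1 x2 x3 y') =
        obsYgivenX3 pU pX3 pY pX1 pX2 x3 y * obsX2givenYX1 pU pX3 pY pX1 pX2 x2 y x1 /
          ∑ y' : AY, obsYgivenX3 pU pX3 pY pX1 pX2 x3 y' *
            obsX2givenYX1 pU pX3 pY pX1 pX2 x2 y' x1 := by
  intro x1 x2 x3 y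
  have : Nonempty A1 := ⟨x1⟩
  have : Nonempty A2 := ⟨x2⟩
  have : Nonempty A3 := ⟨x3⟩
  have : Nonempty AY := ⟨y⟩
  have hsum_pos {ι : Type} [Fintype ι] [Nonempty ι] {f : ι → ℝ} (hf : ∀ i, 0 < f i) :
      0 < ∑ i, f i := sum_pos (fun i _ => hf i) univ_nonempty
  have hobsY : ∀ y', obsYgivenX3 pU pX3 pY pX1 pX2 x3 y' = latentYgivenX3 pU pY x3 y' :=
    obsYgivenX3_eq pU pX3 pY pX1 pX2 hU hY hX1 hX2
      (hsum_pos fun _ => hsum_pos fun _ => hsum_pos fun _ => hpos _ _ _ _).ne'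
  have hobsX2 : ∀ y', obsX2givenYX1 pU pX3 pY pX1 pX2 x2 y' x1 = pX2 x2 y' x1 := fun _ =>
    obsX2givenYX1_eq pU pX3 pY pX1 pX2 hX2
      (hsum_pos fun _ => hsum_pos fun _ => hpos _ _ _ _).ne' x2
  simp only [postInt_eq_mul, hobsY, hobsX2]
  rw [← mul_sum, mul_div_mul_left _ _ (pX3_ne_zero_of_joint_ne_zero pU pX3 pY pX1 pX2
    (hpos x1 x2 x3 y).ne')]

/-- Let `X1, X2, X3, Y, U` take values in finite sets, with strictly
positive joint distribution factorizing as
`P(x1,x2,x3,y) = Σ_u P(u)·P(x3)·P(y|x3,u)·P(x1|u)·P(x2|y,x1)` for given conditional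
probability tables. Then the conditional of the post-intervention distribution
`P_{x1}(x2,x3,y)` (the factorization with `P(x1|u)` deleted) satisfies
`P_{x1}(y | x2, x3) = P(y|x3)·P(x2|y,x1) / Σ_{y'} P(y'|x3)·P(x2|y',x1)`, where `P(y|x3)`
and `P(x2|y,x1)` are the observational conditionals computed from the joint. -/
theorem do_conditional_eq_cidp_functional
    {A1 A2 A3 AY AU : Type}
    [Fintype A1] [Fintype A2] [Fintype A3] [Fintype AY] [Fintype AU]
    (pU : AU → ℝ) (pX3 : A3 → ℝ) (pY : AY → A3 → AU → ℝ)
    (pX1 : A1 → AU → ℝ) (pX2 : A2 → AY → A1 → ℝ)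
    (hU : ∑ u, pU u = 1) (hX3 : ∑ x3, pX3 x3 = 1)
    (hY : ∀ x3 u, ∑ y, pY y x3 u = 1) (hX1 : ∀ u, ∑ x1, pX1 x1 u = 1)
    (hX2 : ∀ y x1, ∑ x2, pX2 x2 y x1 = 1)
    (hUpos : ∀ u, 0 ≤ pU u) (hX3pos : ∀ x3, 0 ≤ pX3 x3)
    (hYpos : ∀ y x3 u, 0 ≤ pY y x3 u) (hX1pos : ∀ x1 u, 0 ≤ pX1 x1 u)
    (hX2pos : ∀ x2 y x1, 0 ≤ pX2 x2 y x1)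
    (hpos : ∀ x1 x2 x3 y, 0 < joint pU pX3 pY pX1 pX2 x1 x2 x3 y) :
    ∀ x1 x2 x3 y,
      postInt pU pX3 pY pX2 x1 x2 x3 y /
          (∑ y' : AY, postInt pU pX3 pY pX2 x1 x2 x3 y') =
        obsYgivenX3 pU pX3 pY pX1 pX2 x3 y * obsX2givenYX1 pU pX3 pY pX1 pX2 x2 y x1 /
          ∑ y' : AY, obsYgivenX3 pU pX3 pY pX1 pX2 x3 y' *
            obsX2givenYX1 pU pX3 pY pX1 pX2 x2 y' x1 :=
  do_conditional_eq_cidp_functional_general pU pX3 pY pX1 pX2 hU hY hX1 hX2 hpos
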